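/- arXiv:1806.07791 — 5 statements merged into one kernel-verified Lean document; each statement's English description precedes it below -/
import Mathlib

section
/- Let Σ₀ and Ω be SPD real n×n matrices and let L be an invertible real n×n matrix with Ω = L Lᵀ. Then the matrix Λ := (1/2) (Lᵀ)⁻¹ √(Lᵀ Σ₀ L) L⁻¹ is symmetric positive definite and satisfies Λ Ω Λ = (1/4) Σ₀. -/
open Matrix
open Classical in
/-- The unique positive semidefinite square root of a positive semidefinite
real matrix (defined as `0` on matrices that are not positive semidefinite). -/
noncomputable def psdSqrt {n : ℕ} (A : Matrix (Fin n) (Fin n) ℝ) : Matrix (Fin n) (Fin n) ℝ :=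
  if h : A.PosSemidef then
    (h.1.eigenvectorUnitary : Matrix (Fin n) (Fin n) ℝ) *
      diagonal ((↑) ∘ (Real.sqrt ·) ∘ h.1.eigenvalues) *
      (star h.1.eigenvectorUnitary : Matrix (Fin n) (Fin n) ℝ)
  else 0

/-!
Write `Ω = L Lᵀ` and `M = √(Lᵀ Σ₀ L)`. Then `Λ = ½ L⁻ᵀ M L⁻¹` is a congruence of the positive
definite matrix `M`, hence positive definite, and in `Λ Ω Λ` the factors `L⁻¹ L` and `Lᵀ L⁻ᵀ`
cancel, leaving `¼ L⁻ᵀ M² L⁻¹ = ¼ Σ₀`.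
-/

open scoped MatrixOrder ComplexOrder

namespace Matrix

lemma psdSqrt_eq_sqrt {n : ℕ} {A : Matrix (Fin n) (Fin n) ℝ} (hA : A.PosSemidef) :
    psdSqrt A = CFC.sqrt A := by
  rw [psdSqrt, dif_pos hA, CFC.sqrt_eq_real_sqrt _ hA.nonneg, cfcₙ_eq_cfc, hA.1.cfc_eq]
  rfl

variable {n : Type*} [Fintype n] [DecidableEq n]

lemma PosDef.sqrt {𝕜 : Type*} [RCLike 𝕜] {A : Matrix n n 𝕜} (hA : A.PosDef) :
    (CFC.sqrt A).PosDef :=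
  (IsStrictlyPositive.sqrt A hA.isStrictlyPositive).posDef

lemma PosDef.transpose_mul_mul_same {R : Type*} [CommRing R] [PartialOrder R] [StarRing R]
    [TrivialStar R] {A B : Matrix n n R} (hA : A.PosDef) (hB : IsUnit B.det) :
    (Bᵀ * A * B).PosDef := by
  simpa using hA.conjTranspose_mul_mul_same <|
    mulVec_injective_of_isUnit ((isUnit_iff_isUnit_det B).2 hB)

lemma transpose_inv_mul_mul_inv_mul_mul_transpose_mul {R : Type*} [CommRing R]
    {L M S : Matrix n n R} (hL : IsUnit L.det) (hM : M * M = Lᵀ * S * L) :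
    ((Lᵀ)⁻¹ * M * L⁻¹) * (L * Lᵀ) * ((Lᵀ)⁻¹ * M * L⁻¹) = S := by
  have hLT : IsUnit Lᵀ.det := by rwa [det_transpose]
  calc ((Lᵀ)⁻¹ * M * L⁻¹) * (L * Lᵀ) * ((Lᵀ)⁻¹ * M * L⁻¹)
      = (Lᵀ)⁻¹ * M * (L⁻¹ * L) * (Lᵀ * (Lᵀ)⁻¹) * M * L⁻¹ := by
        simp only [Matrix.mul_assoc]
    _ = (Lᵀ)⁻¹ * (M * M) * L⁻¹ := by
        rw [nonsing_inv_mul _ hL, mul_nonsing_inv _ hLT]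
        simp only [Matrix.mul_one, Matrix.mul_assoc]
    _ = ((Lᵀ)⁻¹ * Lᵀ) * S * (L * L⁻¹) := by rw [hM]; simp only [Matrix.mul_assoc]
    _ = S := by rw [nonsing_inv_mul _ hLT, mul_nonsing_inv _ hL, Matrix.one_mul, Matrix.mul_one]

end Matrix

theorem stmt0_general {n : ℕ} (S0 W L : Matrix (Fin n) (Fin n) ℝ)
    (hS0 : S0.PosDef) (hL : IsUnit L.det)
    (hfac : W = L * Lᵀ)
    (Lam : Matrix (Fin n) (Fin n) ℝ)
    (hLam : Lam = (1 / 2 : ℝ) • ((Lᵀ)⁻¹ * psdSqrt (Lᵀ * S0 * L) * L⁻¹)) :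
    Lamᵀ = Lam ∧ Lam.PosDef ∧ Lam * W * Lam = (1 / 4 : ℝ) • S0 := by
  have hC : (Lᵀ * S0 * L).PosDef := hS0.transpose_mul_mul_same hL
  rw [psdSqrt_eq_sqrt hC.posSemidef] at hLam
  have hLam_posDef : Lam.PosDef := by
    rw [hLam, ← transpose_nonsing_inv]
    exact (hC.sqrt.transpose_mul_mul_same (isUnit_nonsing_inv_det L hL)).smul (by norm_num)
  refine ⟨hLam_posDef.1.eq, hLam_posDef, ?_⟩
  have hM : CFC.sqrt (Lᵀ * S0 * L) * CFC.sqrt (Lᵀ * S0 * L) = Lᵀ * S0 * L :=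
    CFC.sqrt_mul_sqrt_self _ hC.posSemidef.nonneg
  rw [hLam, hfac, Matrix.smul_mul, Matrix.mul_smul, Matrix.smul_mul, smul_smul,
    transpose_inv_mul_mul_inv_mul_mul_transpose_mul hL hM]
  norm_num

/-- With `Σ₀`, `Ω` SPD and `Ω = L Lᵀ` for invertible `L`, the matrix
`Λ = (1/2) (Lᵀ)⁻¹ √(Lᵀ Σ₀ L) L⁻¹` is symmetric positive definite and
satisfies `Λ Ω Λ = (1/4) Σ₀`. -/
theorem stmt0 {n : ℕ} (S0 W L : Matrix (Fin n) (Fin n) ℝ)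
    (hS0 : S0.PosDef) (hW : W.PosDef) (hL : IsUnit L.det)
    (hfac : W = L * Lᵀ)
    (Lam : Matrix (Fin n) (Fin n) ℝ)
    (hLam : Lam = (1 / 2 : ℝ) • ((Lᵀ)⁻¹ * psdSqrt (Lᵀ * S0 * L) * L⁻¹)) :
    Lamᵀ = Lam ∧ Lam.PosDef ∧ Lam * W * Lam = (1 / 4 : ℝ) • S0 :=
  stmt0_general S0 W L hS0 hL hfac Lam hLam
end

section
/- Let Σ₀ and Ω be SPD real n×n matrices, and let Λ be a real n×n matrix whose symmetric part Λ_S := (1/2)(Λ + Λᵀ) is positive definite. If Λ satisfies the quadratic matrix equation (Λ Λ_S⁻¹ − 2·I)·(1/4)Σ₀ + Λ Ω Λ_S = 0, then Λ is symmetric (its antisymmetric part vanishes) and Λ Ω Λ = (1/4) Σ₀. -/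
/-!
Put `T = Σ₀/4` and `K = Λ_S Ω Λ_S + T`, which is positive definite. As `Λ_S⁻¹ Λ_S = 1`, the
equation says `Λ Λ_S⁻¹ K = 2T`, so `Λ Λ_S⁻¹ K` is symmetric. Together with `Λ + Λᵀ = 2Λ_S` this
makes `X = Λ_S⁻¹ (Λ - Λᵀ) Λ_S⁻¹` a solution of `Λ_S X K + K X Λ_S = 0`. Vectorised, that equation
reads `(Kᵀ ⊗ Λ_S + Λ_Sᵀ ⊗ K) vec X = 0` with a positive definite coefficient, so `X = 0`. Hence
`Λ = Λ_S`, and the equation collapses to `K = 2T`, i.e. `Λ Ω Λ = T`.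
-/

open Matrix

namespace Matrix

variable {𝕜 n : Type*} [RCLike 𝕜] [Fintype n] [DecidableEq n]

open scoped ComplexOrder Kronecker

theorem PosDef.eq_zero_of_mul_mul_add_mul_mul_eq_zero {S K X : Matrix n n 𝕜}
    (hS : S.PosDef) (hK : K.PosDef) (h : S * X * K + K * X * S = 0) : X = 0 := by
  have hM : (Kᵀ ⊗ₖ S + Sᵀ ⊗ₖ K).PosDef :=
    (hK.transpose.kronecker hS).add (hS.transpose.kronecker hK)
  have hvec : (Kᵀ ⊗ₖ S + Sᵀ ⊗ₖ K) *ᵥ vec X = (Kᵀ ⊗ₖ S + Sᵀ ⊗ₖ K) *ᵥ 0 := by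
    rw [add_mulVec, kronecker_mulVec_vec, kronecker_mulVec_vec, transpose_transpose,
      transpose_transpose, ← vec_add, h, vec_zero, mulVec_zero]
  rw [← vec_eq_zero_iff]
  exact mulVec_injective_iff_isUnit.mpr hM.isUnit hvec

theorem isHermitian_of_isHermitian_mul_inv_mul {L S K : Matrix n n 𝕜}
    (hLS : L + Lᴴ = 2 • S) (hS : S.PosDef) (hK : K.PosDef)
    (h : (L * S⁻¹ * K).IsHermitian) : L.IsHermitian := by
  have hSS : S * S⁻¹ = 1 := mul_nonsing_inv _ ((isUnit_iff_isUnit_det _).mp hS.isUnit)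
  have hS'S : S⁻¹ * S = 1 := nonsing_inv_mul _ ((isUnit_iff_isUnit_det _).mp hS.isUnit)
  have hSh : S⁻¹ᴴ = S⁻¹ := by rw [conjTranspose_nonsing_inv, hS.isHermitian.eq]
  have h' : K * S⁻¹ * Lᴴ = L * S⁻¹ * K := by
    simpa only [IsHermitian, conjTranspose_mul, hSh, hK.isHermitian.eq, mul_assoc] using h
  have hX : S * (S⁻¹ * (L - Lᴴ) * S⁻¹) * K + K * (S⁻¹ * (L - Lᴴ) * S⁻¹) * S = 0 := calc
    _ = (S * S⁻¹) * (L - Lᴴ) * S⁻¹ * K + K * S⁻¹ * (L - Lᴴ) * (S⁻¹ * S) := by noncomm_ring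
    _ = 2 • (L * S⁻¹ * K - K * S⁻¹ * Lᴴ) + (K * S⁻¹ * (L + Lᴴ) - (L + Lᴴ) * S⁻¹ * K) := by
      rw [hSS, hS'S, one_mul, mul_one]; noncomm_ring
    _ = 0 := by
      simp only [h', sub_self, smul_zero, zero_add, hLS, mul_smul_comm, smul_mul_assoc, mul_assoc,
        hS'S, hSS, mul_one, one_mul]
  have hdiff : L - Lᴴ = S * (S⁻¹ * (L - Lᴴ) * S⁻¹) * S := by
    simp only [← mul_assoc, hSS, one_mul]; rw [mul_assoc, hS'S, mul_one]
  rw [hS.eq_zero_of_mul_mul_add_mul_mul_eq_zero hK hX, mul_zero, zero_mul, sub_eq_zero] at hdiff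
  exact hdiff.symm

end Matrix

/-- If the symmetric part `Λ_S = (1/2)(Λ + Λᵀ)` of `Λ` is positive definite and `Λ`
satisfies the quadratic matrix equation
`(Λ Λ_S⁻¹ − 2 I) (1/4) Σ₀ + Λ Ω Λ_S = 0` (with `Σ₀`, `Ω` SPD), then `Λ` is symmetric
and `Λ Ω Λ = (1/4) Σ₀`. -/
theorem stmt2 {n : ℕ} (S0 W Lam LamS : Matrix (Fin n) (Fin n) ℝ)
    (hS0 : S0.PosDef) (hW : W.PosDef)
    (hLamS : LamS = (1 / 2 : ℝ) • (Lam + Lamᵀ))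
    (hPD : LamS.PosDef)
    (heq : (Lam * LamS⁻¹ - (2 : ℝ) • (1 : Matrix (Fin n) (Fin n) ℝ)) * ((1 / 4 : ℝ) • S0)
        + Lam * W * LamS = 0) :
    Lamᵀ = Lam ∧ Lam * W * Lam = (1 / 4 : ℝ) • S0 := by
  set T : Matrix (Fin n) (Fin n) ℝ := (1 / 4 : ℝ) • S0
  set K := LamS * W * LamS + T
  have hT : T.PosDef := hS0.smul (by norm_num)
  have hK : K.PosDef := by
    refine PosDef.posSemidef_add ?_ hT
    simpa only [hPD.isHermitian.eq] using hW.posSemidef.mul_mul_conjTranspose_same LamS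
  have hinv : LamS⁻¹ * LamS = 1 := nonsing_inv_mul _ ((isUnit_iff_isUnit_det _).mp hPD.isUnit)
  have hLamK : Lam * LamS⁻¹ * K = T + T := calc
    _ = (Lam * LamS⁻¹ - (2 : ℝ) • (1 : Matrix (Fin n) (Fin n) ℝ)) * T
        + Lam * (LamS⁻¹ * LamS) * W * LamS + (2 : ℝ) • T := by
      simp only [K, sub_mul, smul_mul_assoc, one_mul]; noncomm_ring
    _ = T + T := by rw [hinv, mul_one, heq, zero_add, two_smul]
  have hsymm : Lamᵀ = Lam := by
    have hLS : Lam + Lamᴴ = 2 • LamS := by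
      rw [hLamS, conjTranspose_eq_transpose_of_trivial]; module
    have h := isHermitian_of_isHermitian_mul_inv_mul hLS hPD hK
      (hLamK ▸ hT.isHermitian.add hT.isHermitian)
    rwa [IsHermitian, conjTranspose_eq_transpose_of_trivial] at h
  obtain rfl : LamS = Lam := by rw [hLamS, hsymm]; module
  refine ⟨hsymm, add_right_cancel (b := T) ?_⟩
  rwa [mul_nonsing_inv _ ((isUnit_iff_isUnit_det _).mp hPD.isUnit), one_mul] at hLamK
end

section
/- Let ω₁ > 0, ω₂ > 0 and ρ ∈ (−1, 1). Set Δ := √(ω₁ + ω₂ + 2√(ω₁ω₂)√(1 − ρ²)), Σ₀ := [[1, ρ], [ρ, 1]], Ω := diag(ω₁, ω₂), and Λ := (1/(2Δ))·[[1 + √(ω₂/ω₁)·√(1 − ρ²), ρ], [ρ, 1 + √(ω₁/ω₂)·√(1 − ρ²)]]. Then Λ is a symmetric positive definite 2×2 real matrix and satisfies 4·Λ·Ω·Λ = Σ₀. -/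
open Matrix

/-!
With `g = √(ω₁ω₂)` and `s = √(1 - ρ²)`, the matrix `M = 2ΔΛ` satisfies `M Ω M = (ω₁ + ω₂ + 2gs) Σ₀`,
which is a polynomial identity once `√(ω₂/ω₁) ω₁ = √(ω₁/ω₂) ω₂ = g`; and `ω₁ + ω₂ + 2gs` is exactly `Δ²`.
`M` is positive definite because its diagonal entries are at least `1`, so `det M ≥ 1 - ρ² > 0`.
-/

theorem Matrix.posDef_of_fin_two {R : Type*} [CommRing R] [LinearOrder R] [IsStrictOrderedRing R]
    [StarRing R] [TrivialStar R] {a b c : R} (ha : 0 < a) (hdet : b ^ 2 < a * c) :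
    (!![a, b; b, c]).PosDef := by
  refine .of_dotProduct_mulVec_pos (isHermitian_iff_isSymm.2 ?_) fun x hx => ?_
  · ext i j; fin_cases i <;> fin_cases j <;> rfl
  have hform : star x ⬝ᵥ (!![a, b; b, c] *ᵥ x) =
      a * x 0 ^ 2 + 2 * b * x 0 * x 1 + c * x 1 ^ 2 := by
    simp [dotProduct, mulVec, Fin.sum_univ_two]
    ring
  have hsq : a * (a * x 0 ^ 2 + 2 * b * x 0 * x 1 + c * x 1 ^ 2)
      = (a * x 0 + b * x 1) ^ 2 + (a * c - b ^ 2) * x 1 ^ 2 := by ring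
  rw [hform]
  refine pos_of_mul_pos_right (hsq ▸ ?_) ha.le
  by_cases h1 : x 1 = 0
  · have h0 : x 0 ≠ 0 := fun h0 => hx (funext fun i => by fin_cases i <;> assumption)
    simpa [h1] using pow_two_pos_of_ne_zero (mul_ne_zero ha.ne' h0)
  · have := mul_pos (sub_pos.2 hdet) (pow_two_pos_of_ne_zero h1)
    positivity

theorem Real.sqrt_div_mul_self_eq_sqrt_mul {x : ℝ} (hx : 0 ≤ x) (y : ℝ) :
    √(y / x) * x = √(x * y) := by
  rcases hx.eq_or_lt with rfl | hx
  · simp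
  rw [← Real.sqrt_sq hx.le, ← Real.sqrt_mul' _ (sq_nonneg x), Real.sqrt_sq hx.le]
  congr 1
  field_simp

theorem Real.sqrt_div_mul_sqrt_mul {x y : ℝ} (hx : 0 < x) (hy : 0 ≤ y) :
    √(y / x) * √(x * y) = y := by
  rw [← Real.sqrt_div_mul_self_eq_sqrt_mul hx.le, ← mul_assoc, Real.mul_self_sqrt (by positivity),
    div_mul_cancel₀ y hx.ne']

-- In the application `g, a, b, s` are `√(ω₁ω₂), √(ω₂/ω₁), √(ω₁/ω₂), √(1 - ρ²)`.
theorem kyle_impact_mul_noise_mul_self {R : Type*} [CommRing R] {ω₁ ω₂ ρ s a b g : R}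
    (hag : a * ω₁ = g) (hbg : b * ω₂ = g) (hga : a * g = ω₂) (hgb : b * g = ω₁)
    (hs : s ^ 2 = 1 - ρ ^ 2) :
    !![1 + a * s, ρ; ρ, 1 + b * s] * !![ω₁, 0; 0, ω₂] * !![1 + a * s, ρ; ρ, 1 + b * s] =
      (ω₁ + ω₂ + 2 * g * s) • !![1, ρ; ρ, 1] := by
  ext i j
  fin_cases i <;> fin_cases j <;> simp [Matrix.mul_apply, Fin.sum_univ_two]
  · linear_combination (2 * s + s ^ 2 * a) * hag + s ^ 2 * hga + ω₂ * hs
  · linear_combination ρ * s * (hag + hbg)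
  · linear_combination ρ * s * (hag + hbg)
  · linear_combination (2 * s + s ^ 2 * b) * hbg + s ^ 2 * hgb + ω₁ * hs

/-- Explicit solution of the two-dimensional Kyle model: with `ω₁, ω₂ > 0`, `ρ ∈ (−1,1)`,
`Δ = √(ω₁ + ω₂ + 2√(ω₁ω₂)√(1−ρ²))`, `Σ₀ = [[1,ρ],[ρ,1]]`, `Ω = diag(ω₁,ω₂)`, the matrix
`Λ = (1/(2Δ)) [[1 + √(ω₂/ω₁)√(1−ρ²), ρ],[ρ, 1 + √(ω₁/ω₂)√(1−ρ²)]]` is SPD and satisfies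
`4 Λ Ω Λ = Σ₀`. -/
theorem stmt7 (ω₁ ω₂ ρ : ℝ) (hω₁ : 0 < ω₁) (hω₂ : 0 < ω₂)
    (hρ₁ : -1 < ρ) (hρ₂ : ρ < 1)
    (Δ : ℝ) (hΔ : Δ = Real.sqrt (ω₁ + ω₂ + 2 * Real.sqrt (ω₁ * ω₂) * Real.sqrt (1 - ρ ^ 2)))
    (S0 W Lam : Matrix (Fin 2) (Fin 2) ℝ)
    (hS0 : S0 = !![1, ρ; ρ, 1])
    (hW : W = !![ω₁, 0; 0, ω₂])
    (hLam : Lam = (1 / (2 * Δ)) •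
      !![1 + Real.sqrt (ω₂ / ω₁) * Real.sqrt (1 - ρ ^ 2), ρ;
         ρ, 1 + Real.sqrt (ω₁ / ω₂) * Real.sqrt (1 - ρ ^ 2)]) :
    Lamᵀ = Lam ∧ Lam.PosDef ∧ (4 : ℝ) • (Lam * W * Lam) = S0 := by
  have hρ : ρ ^ 2 < 1 := by nlinarith
  have hD : 0 < ω₁ + ω₂ + 2 * √(ω₁ * ω₂) * √(1 - ρ ^ 2) := by positivity
  obtain ⟨hΔpos, hΔsq⟩ : 0 < Δ ∧ Δ ^ 2 = ω₁ + ω₂ + 2 * √(ω₁ * ω₂) * √(1 - ρ ^ 2) :=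
    hΔ ▸ ⟨Real.sqrt_pos.2 hD, Real.sq_sqrt hD.le⟩
  have hLamPD : Lam.PosDef := by
    refine hLam ▸ PosDef.smul (posDef_of_fin_two (by positivity) (hρ.trans_le ?_)) (by positivity)
    exact one_le_mul_of_one_le_of_one_le (le_add_of_nonneg_right (by positivity))
      (le_add_of_nonneg_right (by positivity))
  refine ⟨isHermitian_iff_isSymm.1 hLamPD.isHermitian, hLamPD, ?_⟩
  have key := kyle_impact_mul_noise_mul_self
    (Real.sqrt_div_mul_self_eq_sqrt_mul hω₁.le ω₂)
    (mul_comm ω₁ ω₂ ▸ Real.sqrt_div_mul_self_eq_sqrt_mul hω₂.le ω₁)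
    (Real.sqrt_div_mul_sqrt_mul hω₁ hω₂.le) (mul_comm ω₁ ω₂ ▸ Real.sqrt_div_mul_sqrt_mul hω₂ hω₁.le)
    (Real.sq_sqrt (by linarith : 0 ≤ 1 - ρ ^ 2))
  rw [hLam, hW, hS0, Matrix.smul_mul, Matrix.smul_mul, Matrix.mul_smul, key, smul_smul, smul_smul,
    smul_smul, ← hΔsq, show (4 : ℝ) * (1 / (2 * Δ)) * (1 / (2 * Δ)) * Δ ^ 2 = 1 by field_simp; ring,
    one_smul]
end

section
/- Let Ω be an SPD real n×n matrix, let s ∈ ℝⁿ be a unit vector (sᵀs = 1), and let σ > 0. Then sᵀΩs > 0, and the matrix Λ := (1/2)·√(σ/(sᵀΩs))·s sᵀ is symmetric positive semidefinite and satisfies 4·Λ·Ω·Λ = σ·s sᵀ. -/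
/-! Since `s sᵀ Ω s sᵀ = (sᵀΩs) s sᵀ`, the multiple `Λ = c s sᵀ` satisfies
`4 Λ Ω Λ = 4c²(sᵀΩs) s sᵀ`, and `c = ½√(σ/(sᵀΩs))` is exactly the choice making `4c²(sᵀΩs) = σ`. -/

open Matrix

theorem vecMulVec_mul_mul_vecMulVec {l m n o : Type*} {α : Type*} [CommSemiring α]
    [Fintype m] [Fintype n] (u : l → α) (v : m → α) (W : Matrix m n α) (x : n → α)
    (y : o → α) :
    vecMulVec u v * W * vecMulVec x y = (v ⬝ᵥ W *ᵥ x) • vecMulVec u y := by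
  rw [Matrix.mul_assoc, mul_vecMulVec, vecMulVec_mul_vecMulVec, vecMulVec_smul]

theorem four_mul_half_sqrt_div_sq_mul {σ q : ℝ} (hσ : 0 ≤ σ) (hq : 0 < q) :
    4 * (1 / 2 * √(σ / q)) * (1 / 2 * √(σ / q)) * q = σ := by
  have hsq : √(σ / q) * √(σ / q) = σ / q := Real.mul_self_sqrt (by positivity)
  calc 4 * (1 / 2 * √(σ / q)) * (1 / 2 * √(σ / q)) * q = √(σ / q) * √(σ / q) * q := by ring
    _ = σ := by rw [hsq, div_mul_cancel₀ σ hq.ne']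

/-- Rank-one price covariance: for SPD `Ω`, a unit vector `s` and `σ > 0`, one has
`sᵀΩs > 0`, and `Λ = (1/2)√(σ/(sᵀΩs)) s sᵀ` is symmetric positive semidefinite with
`4 Λ Ω Λ = σ s sᵀ`. -/
theorem stmt8 {n : ℕ} (W : Matrix (Fin n) (Fin n) ℝ) (hW : W.PosDef)
    (s : Fin n → ℝ) (hs : s ⬝ᵥ s = 1)
    (σ : ℝ) (hσ : 0 < σ)
    (Lam : Matrix (Fin n) (Fin n) ℝ)
    (hLam : Lam = ((1 / 2 : ℝ) * Real.sqrt (σ / (s ⬝ᵥ W.mulVec s))) • vecMulVec s s) :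
    0 < s ⬝ᵥ W.mulVec s ∧ Lamᵀ = Lam ∧ Lam.PosSemidef ∧
      (4 : ℝ) • (Lam * W * Lam) = σ • vecMulVec s s := by
  have hs₀ : s ≠ 0 := by
    rintro rfl
    simp at hs
  have hq : 0 < s ⬝ᵥ W *ᵥ s := by simpa using hW.dotProduct_mulVec_pos hs₀
  generalize hc : 1 / 2 * √(σ / (s ⬝ᵥ W *ᵥ s)) = c at hLam
  subst hLam
  refine ⟨hq, by rw [transpose_smul, transpose_vecMulVec], ?_, ?_⟩
  · have hP : (vecMulVec s s).PosSemidef := by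
      simpa using posSemidef_vecMulVec_self_star s
    exact hP.smul (hc ▸ by positivity)
  · rw [smul_mul, smul_mul, Matrix.mul_smul, vecMulVec_mul_mul_vecMulVec, smul_smul, smul_smul,
      smul_smul, ← hc, four_mul_half_sqrt_div_sq_mul hσ.le hq]
end

section
/- Let Ω be an SPD real n×n matrix, let R be a real n×n matrix, let (s_1, …, s_n) be an orthonormal basis of ℝⁿ, and define χ²(Λ) := (1/2)·tr(Λᵀ Λ Ω − 2 Λᵀ R + Σ) for a fixed real n×n matrix Σ. Among all matrices of the form Λ(g) = Σ_{a=1}^n g_a · s_a s_aᵀ with g ∈ ℝⁿ, the loss χ²(Λ(g)) is minimized at the unique point g_a = (s_aᵀ R s_a)/(s_aᵀ Ω s_a) for a = 1, …, n. -/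
/-! Since the `sₐ` are orthonormal, the projectors `sₐ sₐᵀ` are mutually orthogonal idempotents,
so `Λ(g)` is symmetric with `Λ(g)² = Λ(g²)`. Taking traces, the loss decouples into
`χ²(Λ(g)) = ½ ∑ₐ (ωₐ gₐ² − 2 ρₐ gₐ) + ½ tr Σ` with `ωₐ = sₐᵀ Ω sₐ > 0` and `ρₐ = sₐᵀ R sₐ`,
and completing the square in each coordinate gives the unique minimizer `gₐ = ρₐ / ωₐ`. -/

open Matrix Finset

namespace Matrix

variable {ι m R : Type*} [Fintype ι] [CommRing R]

def spectralSum (s : ι → m → R) (g : ι → R) : Matrix m m R :=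
  ∑ a, g a • vecMulVec (s a) (s a)

variable (s : ι → m → R)

@[simp]
theorem transpose_spectralSum (g : ι → R) : (spectralSum s g)ᵀ = spectralSum s g := by
  simp [spectralSum, transpose_sum]

theorem spectralSum_mul_spectralSum [Fintype m] [DecidableEq ι]
    (hs : ∀ a b, s a ⬝ᵥ s b = if a = b then 1 else 0) (g h : ι → R) :
    spectralSum s g * spectralSum s h = spectralSum s (g * h) := by
  simp only [spectralSum, sum_mul_sum, smul_mul_smul_comm, vecMulVec_mul_vecMulVec, hs]
  refine sum_congr rfl fun a _ => ?_
  rw [sum_eq_single a (fun b _ hba => by simp [Ne.symm hba]) (by simp)]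
  simp

theorem trace_spectralSum_mul [Fintype m] (g : ι → R) (M : Matrix m m R) :
    (spectralSum s g * M).trace = ∑ a, g a * (s a ⬝ᵥ M *ᵥ s a) := by
  simp only [spectralSum, sum_mul, smul_mul_assoc, trace_sum, trace_smul, vecMulVec_mul,
    trace_vecMulVec, smul_eq_mul]
  exact sum_congr rfl fun a _ => by rw [dotProduct_mulVec, dotProduct_comm]

theorem trace_quadraticLoss_spectralSum [Fintype m] [DecidableEq ι]
    (hs : ∀ a b, s a ⬝ᵥ s b = if a = b then 1 else 0) (g : ι → R) (W B S : Matrix m m R) :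
    ((spectralSum s g)ᵀ * spectralSum s g * W - (2 : R) • ((spectralSum s g)ᵀ * B) + S).trace
      = ∑ a, ((s a ⬝ᵥ W *ᵥ s a) * g a ^ 2 - 2 * (s a ⬝ᵥ B *ᵥ s a) * g a) + S.trace := by
  rw [transpose_spectralSum, spectralSum_mul_spectralSum s hs, trace_add, trace_sub, trace_smul,
    trace_spectralSum_mul, trace_spectralSum_mul, smul_eq_mul, mul_sum, ← sum_sub_distrib]
  congr 1
  exact sum_congr rfl fun a _ => by rw [Pi.mul_apply]; ring

end Matrix

section SeparableQuadratic

variable {ι K : Type*} [Fintype ι] [Field K] {w : ι → K} (r : ι → K)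

theorem sum_quadratic_eq_add_sum_sq (hw : ∀ a, w a ≠ 0) (g : ι → K) :
    ∑ a, (w a * g a ^ 2 - 2 * r a * g a)
      = ∑ a, (w a * (r / w) a ^ 2 - 2 * r a * (r / w) a) + ∑ a, w a * (g a - (r / w) a) ^ 2 := by
  rw [← sum_add_distrib]
  refine sum_congr rfl fun a _ => ?_
  rw [Pi.div_apply]
  field_simp [hw a]
  ring

variable [LinearOrder K] [IsStrictOrderedRing K]

theorem sum_quadratic_div_le (hw : ∀ a, 0 < w a) (g : ι → K) :
    ∑ a, (w a * (r / w) a ^ 2 - 2 * r a * (r / w) a) ≤ ∑ a, (w a * g a ^ 2 - 2 * r a * g a) := by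
  rw [sum_quadratic_eq_add_sum_sq r (fun a => (hw a).ne') g, le_add_iff_nonneg_right]
  exact sum_nonneg fun a _ => mul_nonneg (hw a).le (sq_nonneg _)

theorem eq_div_of_sum_quadratic_eq (hw : ∀ a, 0 < w a) {g : ι → K}
    (h : ∑ a, (w a * g a ^ 2 - 2 * r a * g a) = ∑ a, (w a * (r / w) a ^ 2 - 2 * r a * (r / w) a)) :
    g = r / w := by
  rw [sum_quadratic_eq_add_sum_sq r (fun a => (hw a).ne') g, add_eq_left,
    sum_eq_zero_iff_of_nonneg fun a _ => mul_nonneg (hw a).le (sq_nonneg _)] at h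
  funext a
  simpa [(hw a).ne', sub_eq_zero] using h a (mem_univ a)

end SeparableQuadratic

/-- The EigenLiquidity estimator: for SPD `Ω`, response `R`, an orthonormal basis
`s₁, …, sₙ` of `ℝⁿ` and the loss `χ²(Λ) = (1/2) tr(Λᵀ Λ Ω − 2 Λᵀ R + Σ)`, among all
matrices `Λ(g) = ∑ₐ gₐ sₐ sₐᵀ` the loss is minimized at the unique point
`gₐ = (sₐᵀ R sₐ)/(sₐᵀ Ω sₐ)`. -/
theorem stmt11 {n : ℕ} (W R S : Matrix (Fin n) (Fin n) ℝ) (hW : W.PosDef)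
    (s : Fin n → Fin n → ℝ)
    (hortho : ∀ a b : Fin n, s a ⬝ᵥ s b = if a = b then (1 : ℝ) else 0)
    (χ : Matrix (Fin n) (Fin n) ℝ → ℝ)
    (hχ : ∀ Lam : Matrix (Fin n) (Fin n) ℝ,
      χ Lam = (1 / 2 : ℝ) * (Lamᵀ * Lam * W - (2 : ℝ) • (Lamᵀ * R) + S).trace)
    (Lam : (Fin n → ℝ) → Matrix (Fin n) (Fin n) ℝ)
    (hLam : ∀ g : Fin n → ℝ, Lam g = ∑ a : Fin n, g a • vecMulVec (s a) (s a))
    (gstar : Fin n → ℝ)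
    (hgstar : ∀ a : Fin n, gstar a = (s a ⬝ᵥ R.mulVec (s a)) / (s a ⬝ᵥ W.mulVec (s a))) :
    (∀ g : Fin n → ℝ, χ (Lam gstar) ≤ χ (Lam g)) ∧
    (∀ g : Fin n → ℝ, χ (Lam g) = χ (Lam gstar) → g = gstar) := by
  obtain rfl : Lam = spectralSum s := funext hLam
  obtain rfl : gstar = (fun a => s a ⬝ᵥ R *ᵥ s a) / fun a => s a ⬝ᵥ W *ᵥ s a := funext hgstar
  have hpos (a : Fin n) : 0 < s a ⬝ᵥ W *ᵥ s a := by
    have hs : s a ≠ 0 := fun h => by simpa [h] using hortho a a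
    simpa using hW.dotProduct_mulVec_pos hs
  simp only [hχ, trace_quadraticLoss_spectralSum s hortho]
  refine ⟨fun g => ?_, fun g hg => ?_⟩
  · linarith [sum_quadratic_div_le (fun a => s a ⬝ᵥ R *ᵥ s a) hpos g]
  · exact eq_div_of_sum_quadratic_eq _ hpos (by linarith)
end
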